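/- arXiv:1609.09336 — 5 statements merged into one kernel-verified Lean document; each statement's English description precedes it below -/
import Mathlib

section
/- Let r ≥ 1, let b_1,…,b_r be nonzero real numbers, y_1,…,y_r real numbers, α_1,…,α_r real orders, and n_1,…,n_r nonnegative integers. Define Î_{n_1,…,n_r}(x) = (1/(n_1!⋯n_r!)) ∫_0^x ∏_{s=1}^r E_{n_s}^{(α_s)}(b_s z + y_s) dz, and for nonnegative integers k_1,…,k_r define Ĉ_{k_1,…,k_r}(x) = (1/(k_1!⋯k_r!)) ( ∏_{s=1}^r E_{k_s}^{(α_s)}(b_s x + y_s) − ∏_{s=1}^r E_{k_s}^{(α_s)}(y_s) ). Then with μ = n_1 + ⋯ + n_{r−1}, for every real x one has Î_{n_1,…,n_r}(x) = Σ_{a=0}^{μ} (−1)^a Σ_{j_1+⋯+j_{r−1}=a, 0 ≤ j_s ≤ n_s} (a!/(j_1!⋯j_{r−1}!)) b_1^{j_1}⋯b_{r−1}^{j_{r−1}} b_r^{−a−1} Ĉ_{n_1−j_1,…,n_{r−1}−j_{r−1}, n_r+a+1}(x) (the remainder integral vanishes because the (μ+1)-st derivative of the degree-μ product ∏_{s=1}^{r−1}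 E_{n_s}^{(α_s)}(b_s z + y_s) is zero). -/
/-- Higher-order Euler polynomial `E_m^{(α)}(z)` of real order `α`, defined as the `m`-th
Taylor coefficient (times `m!`) of the generating function `(2/(e^u+1))^α e^{uz}` at `u = 0`. -/
noncomputable def eulerH (α : ℝ) (m : ℕ) (z : ℝ) : ℝ :=
  iteratedDeriv m (fun u : ℝ => (2 / (Real.exp u + 1)) ^ α * Real.exp (u * z)) 0

open Finset Polynomial
open scoped Nat

/-!
By Leibniz's rule applied to `(2/(e^u+1))^α · e^{uz}`, `E_m^{(α)}` is a polynomial with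
`E_{m+1}' = (m+1) E_m`, so `e_m(z) = E_m^{(α)}(b z + y) / m!` satisfies `e_{m+1}' = b e_m`, and
`b^{-a-1} e_{n+a+1}` is an `(a+1)`-fold antiderivative of `e_n`. Integrating `P · e_{n_r}` by parts
`μ + 1` times, where `P` is the product of the first `r - 1` normalized factors, leaves no remainder
because `deg P ≤ μ`. The derivatives `P^{(a)}` are expanded by the Leibniz rule for Hasse
derivatives, which turns `P^{(a)}/a!` into a sum of products of `b_i^{j_i} e_{n_i - j_i} / j_i!`.
-/

theorem Finset.Nat.sum_antidiagonalTuple_succ {M : Type*} [AddCommMonoid M] (k a : ℕ)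
    (f : (Fin (k + 1) → ℕ) → M) :
    ∑ j ∈ Nat.antidiagonalTuple (k + 1) a, f j =
      ∑ p ∈ antidiagonal a, ∑ t ∈ Nat.antidiagonalTuple k p.2, f (Fin.cons p.1 t) := by
  rw [sum_sigma']
  refine (sum_nbij' (fun x => Fin.cons x.1.1 x.2)
    (fun j => ⟨(j 0, ∑ i : Fin k, j i.succ), Fin.tail j⟩) ?_ ?_ ?_ ?_ ?_).symm
  · rintro ⟨⟨p, q⟩, t⟩ hx
    simp only [mem_sigma, HasAntidiagonal.mem_antidiagonal, Nat.mem_antidiagonalTuple] at hx ⊢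
    simp [Fin.sum_univ_succ, hx.1, hx.2]
  · intro j hj
    simp only [mem_sigma, HasAntidiagonal.mem_antidiagonal, Nat.mem_antidiagonalTuple] at hj ⊢
    exact ⟨by rw [← hj, Fin.sum_univ_succ], rfl⟩
  · rintro ⟨⟨p, q⟩, t⟩ hx
    simp only [mem_sigma, Nat.mem_antidiagonalTuple] at hx
    simp [hx.2]
  · exact fun j _ => Fin.cons_self_tail j
  · exact fun _ _ => rfl

theorem Polynomial.hasseDeriv_prod_fin {R : Type*} [CommSemiring R] (k a : ℕ)
    (g : Fin k → R[X]) :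
    hasseDeriv a (∏ i, g i) = ∑ j ∈ Nat.antidiagonalTuple k a, ∏ i, hasseDeriv (j i) (g i) := by
  induction k generalizing a with
  | zero =>
    rcases a with _ | a
    · simp
    · simp [hasseDeriv_apply_one (k := a + 1) a.succ_pos]
  | succ k ih =>
    simp only [Fin.prod_univ_succ, hasseDeriv_mul, Nat.sum_antidiagonalTuple_succ, ih, mul_sum,
      Fin.cons_zero, Fin.cons_succ]

theorem Polynomial.derivative_sum_alternating_iterate_derivative_mul {R : Type*} [CommRing R]
    (P : R[X]) {F : ℕ → R[X]} (hF : ∀ a, derivative (F (a + 1)) = F a) (μ : ℕ) :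
    derivative (∑ a ∈ range (μ + 1), (-1) ^ a * (derivative^[a] P * F a)) =
      P * derivative (F 0) + (-1) ^ μ * (derivative^[μ + 1] P * F μ) := by
  induction μ with
  | zero => simp [derivative_mul, add_comm]
  | succ μ ih =>
    rw [sum_range_succ, derivative_add, ih]
    simp only [derivative_mul, hF, ← Function.iterate_succ_apply' derivative, derivative_pow,
      derivative_neg, derivative_one, neg_zero, mul_zero, zero_mul, zero_add, pow_succ]
    ring

theorem Polynomial.intervalIntegral_derivative (q : ℝ[X]) (u v : ℝ) :
    ∫ z in u..v, (derivative q).eval z = q.eval v - q.eval u :=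
  intervalIntegral.integral_eq_sub_of_hasDerivAt (fun z _ => q.hasDerivAt z)
    ((derivative q).continuous.intervalIntegrable _ _)

theorem Polynomial.intervalIntegral_mul_derivative_eq_sum {μ : ℕ} {P : ℝ[X]}
    (hP : P.natDegree ≤ μ) {F : ℕ → ℝ[X]} (hF : ∀ a, derivative (F (a + 1)) = F a) (u v : ℝ) :
    ∫ z in u..v, P.eval z * (derivative (F 0)).eval z =
      ∑ a ∈ range (μ + 1), (-1) ^ a *
        ((derivative^[a] P).eval v * (F a).eval v - (derivative^[a] P).eval u * (F a).eval u) := by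
  have htele := derivative_sum_alternating_iterate_derivative_mul P hF μ
  rw [iterate_derivative_eq_zero (by omega), zero_mul, mul_zero, add_zero] at htele
  simp_rw [← eval_mul, ← htele, intervalIntegral_derivative, eval_finsetSum, ← sum_sub_distrib]
  simp [mul_sub]

theorem Polynomial.iterate_derivative_of_derivative_succ {R : Type*} [CommSemiring R]
    {q : ℕ → R[X]} {c : R} (hq : ∀ m, derivative (q (m + 1)) = C c * q m) {j m : ℕ} (hjm : j ≤ m) :
    derivative^[j] (q m) = C (c ^ j) * q (m - j) := by
  induction j with
  | zero => simp
  | succ j ih =>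
    obtain ⟨l, hl⟩ : ∃ l, m - j = l + 1 := ⟨m - j - 1, by omega⟩
    rw [Function.iterate_succ_apply', ih (by omega), derivative_C_mul, hl, hq,
      show m - (j + 1) = l by omega, ← mul_assoc, ← C_mul, pow_succ]

section

variable {K : Type*} [Field K] {q : ℕ → K[X]} {c : K}

theorem Polynomial.hasseDeriv_of_derivative_succ [CharZero K]
    (hq : ∀ m, derivative (q (m + 1)) = C c * q m) (hdeg : ∀ m, (q m).natDegree ≤ m) (j m : ℕ) :
    hasseDeriv j (q m) = if j ≤ m then C (c ^ j / j !) * q (m - j) else 0 := by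
  split_ifs with hjm
  · have h := congrFun (factorial_smul_hasseDeriv (R := K) (k := j)) (q m)
    rw [iterate_derivative_of_derivative_succ hq hjm, LinearMap.smul_apply, nsmul_eq_mul,
      ← C_eq_natCast] at h
    rw [div_eq_mul_inv, C_mul, mul_comm (C (c ^ j)), mul_assoc, ← h, ← mul_assoc, ← C_mul,
      inv_mul_cancel₀ (Nat.cast_ne_zero.mpr j.factorial_ne_zero), C_1, one_mul]
  · exact hasseDeriv_eq_zero_of_lt_natDegree _ _ ((hdeg m).trans_lt (by omega))

noncomputable def antiderivSeq (q : ℕ → K[X]) (c : K) (n a : ℕ) : K[X] :=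
  C (c ^ (a + 1))⁻¹ * q (n + a + 1)

theorem derivative_antiderivSeq_succ (hq : ∀ m, derivative (q (m + 1)) = C c * q m) (hc : c ≠ 0)
    (n a : ℕ) : derivative (antiderivSeq q c n (a + 1)) = antiderivSeq q c n a := by
  rw [antiderivSeq, antiderivSeq, derivative_C_mul, show n + (a + 1) + 1 = n + a + 1 + 1 by omega,
    hq, ← mul_assoc, ← C_mul, pow_succ c (a + 1), mul_inv, inv_mul_cancel_right₀ hc]

theorem derivative_antiderivSeq_zero (hq : ∀ m, derivative (q (m + 1)) = C c * q m) (hc : c ≠ 0)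
    (n : ℕ) : derivative (antiderivSeq q c n 0) = q n := by
  rw [antiderivSeq, derivative_C_mul, hq, ← mul_assoc, ← C_mul, zero_add, pow_one,
    inv_mul_cancel₀ hc, C_1, one_mul]

end

theorem Polynomial.iterate_derivative_prod_of_derivative_succ {K : Type*} [Field K] [CharZero K]
    {k : ℕ} {q : Fin k → ℕ → K[X]} {c : Fin k → K}
    (hq : ∀ i m, derivative (q i (m + 1)) = C (c i) * q i m)
    (hdeg : ∀ i m, (q i m).natDegree ≤ m) (n : Fin k → ℕ) (a : ℕ) :
    derivative^[a] (∏ i, q i (n i)) =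
      ∑ j ∈ (Nat.antidiagonalTuple k a).filter (fun j => ∀ i, j i ≤ n i),
        C ((a ! / ∏ i, ((j i)! : K)) * ∏ i, c i ^ j i) * ∏ i, q i (n i - j i) := by
  rw [← factorial_smul_hasseDeriv, LinearMap.smul_apply, hasseDeriv_prod_fin]
  simp only [hasseDeriv_of_derivative_succ (hq _) (hdeg _), Fintype.prod_ite_zero, smul_sum,
    smul_ite, smul_zero]
  rw [← sum_filter]
  refine sum_congr rfl fun j _ => ?_
  rw [prod_mul_distrib, ← map_prod, nsmul_eq_mul, ← C_eq_natCast, ← mul_assoc, ← C_mul,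
    prod_div_distrib]
  congr 2
  ring

lemma contDiff_two_div_exp_add_one_rpow (α : ℝ) :
    ContDiff ℝ ⊤ fun u : ℝ => (2 / (Real.exp u + 1)) ^ α := by
  have h : ContDiff ℝ ⊤ fun u : ℝ => 2 / (Real.exp u + 1) :=
    contDiff_const.div (Real.contDiff_exp.add contDiff_const) fun _ => by positivity
  exact h.rpow_const_of_ne fun _ => by positivity

noncomputable def eulerPoly (α : ℝ) (m : ℕ) : ℝ[X] :=
  ∑ i ∈ range (m + 1), C (m.choose i *
    iteratedDeriv i (fun u : ℝ => (2 / (Real.exp u + 1)) ^ α) 0) * X ^ (m - i)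

theorem eval_eulerPoly (α : ℝ) (m : ℕ) (z : ℝ) : (eulerPoly α m).eval z = eulerH α m z := by
  have hexp : ContDiff ℝ ⊤ fun u : ℝ => Real.exp (z * u) :=
    Real.contDiff_exp.comp (contDiff_const.mul contDiff_id)
  simp_rw [eulerH, mul_comm _ z]
  rw [iteratedDeriv_fun_mul ((contDiff_two_div_exp_add_one_rpow α).contDiffAt.of_le le_top)
    (hexp.contDiffAt.of_le le_top)]
  simp [eulerPoly, eval_finsetSum, mul_assoc]

theorem natDegree_eulerPoly_le (α : ℝ) (m : ℕ) : (eulerPoly α m).natDegree ≤ m :=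
  natDegree_sum_le_of_forall_le _ _ fun i _ =>
    (natDegree_C_mul_X_pow_le _ _).trans (Nat.sub_le m i)

theorem derivative_eulerPoly_succ (α : ℝ) (m : ℕ) :
    derivative (eulerPoly α (m + 1)) = C ((m : ℝ) + 1) * eulerPoly α m := by
  rw [eulerPoly, eulerPoly, derivative_sum, sum_range_succ, mul_sum]
  simp only [Nat.sub_self, derivative_C_mul_X_pow, Nat.cast_zero, mul_zero, C_0, zero_mul,
    add_zero]
  refine sum_congr rfl fun i _ => ?_
  have hchoose : ((m + 1).choose i : ℝ) * ((m + 1 - i : ℕ) : ℝ) = m.choose i * ((m : ℝ) + 1) := by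
    exact_mod_cast (Nat.choose_mul_succ_eq m i).symm
  rw [show m + 1 - i - 1 = m - i by omega, ← mul_assoc, ← C_mul]
  congr 2
  linear_combination (iteratedDeriv i (fun u : ℝ => (2 / (Real.exp u + 1)) ^ α) 0) * hchoose

noncomputable def eulerPolyAffine (α b y : ℝ) (m : ℕ) : ℝ[X] :=
  C (m ! : ℝ)⁻¹ * (eulerPoly α m).comp (C b * X + C y)

theorem eval_eulerPolyAffine (α b y : ℝ) (m : ℕ) (z : ℝ) :
    (eulerPolyAffine α b y m).eval z = eulerH α m (b * z + y) / m ! := by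
  simp [eulerPolyAffine, eval_eulerPoly, div_eq_inv_mul]

theorem natDegree_eulerPolyAffine_le (α b y : ℝ) (m : ℕ) :
    (eulerPolyAffine α b y m).natDegree ≤ m := by
  refine (natDegree_C_mul_le _ _).trans (natDegree_comp_le.trans ?_)
  calc (eulerPoly α m).natDegree * (C b * X + C y).natDegree ≤ m * 1 :=
        Nat.mul_le_mul (natDegree_eulerPoly_le α m) natDegree_linear_le
    _ = m := mul_one m

theorem derivative_eulerPolyAffine_succ (α b y : ℝ) (m : ℕ) :
    derivative (eulerPolyAffine α b y (m + 1)) = C b * eulerPolyAffine α b y m := by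
  have hfac : ((m + 1)! : ℝ)⁻¹ * ((m : ℝ) + 1) = (m ! : ℝ)⁻¹ := by
    push_cast [Nat.factorial_succ]
    field_simp
  simp only [eulerPolyAffine, derivative_C_mul, derivative_comp, derivative_eulerPoly_succ,
    mul_comp, C_comp, derivative_add, derivative_X, derivative_C, add_zero, mul_one]
  rw [← hfac, C_mul]
  ring

/-- With `r = k + 1`, the indices `1, …, r - 1` are the `i.castSucc` for `i : Fin k` and `r` is
`Fin.last k`; the filter drops the terms with some `j i > n i`. -/
theorem stmt_1 (k : ℕ) (b y α : Fin (k + 1) → ℝ) (hb : ∀ s, b s ≠ 0)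
    (n : Fin (k + 1) → ℕ) (x : ℝ) :
    (1 / ∏ s, ((n s).factorial : ℝ)) *
        ∫ z in (0 : ℝ)..x, ∏ s, eulerH (α s) (n s) (b s * z + y s)
      = ∑ a ∈ Finset.range ((∑ i : Fin k, n i.castSucc) + 1), (-1 : ℝ) ^ a *
          ∑ j ∈ (Finset.Nat.antidiagonalTuple k a).filter
              (fun j => ∀ i, j i ≤ n i.castSucc),
            ((a.factorial : ℝ) / ∏ i, ((j i).factorial : ℝ)) *
            (∏ i, b i.castSucc ^ (j i)) * b (Fin.last k) ^ (-(a : ℤ) - 1) *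
            ((1 / ((∏ i, ((n i.castSucc - j i).factorial : ℝ)) *
                  ((n (Fin.last k) + a + 1).factorial : ℝ))) *
              ((∏ i, eulerH (α i.castSucc) (n i.castSucc - j i)
                    (b i.castSucc * x + y i.castSucc)) *
                  eulerH (α (Fin.last k)) (n (Fin.last k) + a + 1)
                    (b (Fin.last k) * x + y (Fin.last k))
                - (∏ i, eulerH (α i.castSucc) (n i.castSucc - j i) (y i.castSucc)) *
                  eulerH (α (Fin.last k)) (n (Fin.last k) + a + 1) (y (Fin.last k)))) := by
  set r := Fin.last k
  set E : Fin (k + 1) → ℕ → ℝ[X] := fun s => eulerPolyAffine (α s) (b s) (y s)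
  have hE (s : Fin (k + 1)) (m : ℕ) : derivative (E s (m + 1)) = C (b s) * E s m :=
    derivative_eulerPolyAffine_succ _ _ _ m
  set P := ∏ i : Fin k, E i.castSucc (n i.castSucc)
  set F := antiderivSeq (E r) (b r) (n r)
  have hP : P.natDegree ≤ ∑ i : Fin k, n i.castSucc :=
    (natDegree_prod_le _ _).trans (sum_le_sum fun i _ => natDegree_eulerPolyAffine_le _ _ _ _)
  have hLHS : (1 / ∏ s, ((n s)! : ℝ)) *
        ∫ z in (0 : ℝ)..x, ∏ s, eulerH (α s) (n s) (b s * z + y s) =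
      ∫ z in (0 : ℝ)..x, P.eval z * (derivative (F 0)).eval z := by
    rw [derivative_antiderivSeq_zero (hE r) (hb r), ← intervalIntegral.integral_const_mul]
    refine intervalIntegral.integral_congr fun z _ => ?_
    simp only [P, E, eval_prod, eval_eulerPolyAffine, Fin.prod_univ_castSucc, prod_div_distrib]
    ring
  rw [hLHS, intervalIntegral_mul_derivative_eq_sum hP
    (derivative_antiderivSeq_succ (hE r) (hb r) _)]
  refine sum_congr rfl fun a _ => ?_
  rw [iterate_derivative_prod_of_derivative_succ (fun i => hE i.castSucc)
    (fun i => natDegree_eulerPolyAffine_le _ _ _)]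
  simp only [antiderivSeq, E, eval_finsetSum, eval_mul, eval_C, eval_prod,
    eval_eulerPolyAffine, sum_mul, ← sum_sub_distrib, mul_sum, mul_zero, zero_add]
  refine sum_congr rfl fun j _ => ?_
  rw [show -(a : ℤ) - 1 = -((a + 1 : ℕ) : ℤ) by push_cast; ring, zpow_neg, zpow_natCast,
    prod_div_distrib, prod_div_distrib]
  ring
end

section
/- For all real x, y, every real order n, and every nonnegative integer m: Σ_{k=0}^{m} C(m,k) B_{m−k}^{(n)}(x) E_k^{(n)}(y) = 2^m B_m^{(n)}((x+y)/2). -/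
/-- Higher-order Bernoulli polynomial `B_m^{(α)}(z)` of real order `α`, defined as the `m`-th
Taylor coefficient (times `m!`) of the generating function `(u/(e^u-1))^α e^{uz}` at `u = 0`
(the removable singularity at `u = 0` being filled in with the limit value `1`). -/
noncomputable def bernoulliH (α : ℝ) (m : ℕ) (z : ℝ) : ℝ :=
  iteratedDeriv m
    (fun u : ℝ => (if u = 0 then (1 : ℝ) else u / (Real.exp u - 1)) ^ α * Real.exp (u * z)) 0

/-!
Write `φ(u) = (e^u - 1)/u`, an entire positive function (here `dslope exp 0`), so that the
Bernoulli generating function is `φ(u)^{-α} e^{uz}`. The duplication formula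
`φ(2u) = φ(u) (e^u + 1)/2` turns the product of the Euler generating function at `y` and the
Bernoulli generating function at `x` into the Bernoulli generating function at `(x + y)/2`
evaluated at `2u`. Comparing `m`-th derivatives at `0` (Leibniz rule on the left, chain rule on
the right) gives the identity.
-/

open Real

theorem AnalyticAt.dslope {𝕜 E : Type*} [NontriviallyNormedField 𝕜] [NormedAddCommGroup E]
    [NormedSpace 𝕜 E] {f : 𝕜 → E} {a b : 𝕜} (ha : AnalyticAt 𝕜 f a) (hb : AnalyticAt 𝕜 f b) :
    AnalyticAt 𝕜 (dslope f a) b := by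
  rcases eq_or_ne b a with rfl | hba
  · obtain ⟨p, hp⟩ := ha
    exact ⟨_, hp.has_fpower_series_dslope_fslope⟩
  · refine AnalyticAt.congr ?_ (dslope_eventuallyEq_slope_of_ne f hba).symm
    simp only [slope_fun_def]
    exact (analyticAt_id.sub analyticAt_const).inv (sub_ne_zero.2 hba) |>.smul
      (hb.sub analyticAt_const)

lemma contDiff_dslope_exp_zero : ContDiff ℝ ⊤ (dslope exp 0) :=
  contDiff_iff_contDiffAt.2 fun _ => (analyticAt_rexp.dslope analyticAt_rexp).contDiffAt

lemma dslope_exp_zero_of_ne {u : ℝ} (hu : u ≠ 0) : dslope exp 0 u = (exp u - 1) / u := by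
  rw [dslope_of_ne _ hu, slope_def_field, exp_zero, sub_zero]

lemma dslope_exp_zero_pos (u : ℝ) : 0 < dslope exp 0 u := by
  rcases lt_trichotomy u 0 with hu | rfl | hu
  · rw [dslope_exp_zero_of_ne hu.ne]
    exact div_pos_of_neg_of_neg (by linarith [exp_lt_one_iff.2 hu]) hu
  · simp [dslope_same]
  · rw [dslope_exp_zero_of_ne hu.ne']
    exact div_pos (by linarith [one_lt_exp_iff.2 hu]) hu

lemma dslope_exp_zero_two_mul (u : ℝ) :
    dslope exp 0 (2 * u) = dslope exp 0 u * (exp u + 1) / 2 := by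
  rcases eq_or_ne u 0 with rfl | hu
  · norm_num [dslope_same]
  · rw [dslope_exp_zero_of_ne hu, dslope_exp_zero_of_ne (mul_ne_zero two_ne_zero hu), two_mul u,
      exp_add]
    field_simp
    ring

lemma inv_dslope_exp_zero (u : ℝ) :
    (dslope exp 0 u)⁻¹ = if u = 0 then 1 else u / (exp u - 1) := by
  split_ifs with hu
  · simp [hu, dslope_same]
  · rw [dslope_exp_zero_of_ne hu, inv_div]

noncomputable def bernoulliGen (α z : ℝ) : ℝ → ℝ :=
  fun u => (dslope exp 0 u)⁻¹ ^ α * exp (u * z)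

noncomputable def eulerGen (α z : ℝ) : ℝ → ℝ :=
  fun u => (2 / (exp u + 1)) ^ α * exp (u * z)

lemma bernoulliH_eq_iteratedDeriv_bernoulliGen (α : ℝ) (m : ℕ) (z : ℝ) :
    bernoulliH α m z = iteratedDeriv m (bernoulliGen α z) 0 := by
  unfold bernoulliH bernoulliGen
  simp only [inv_dslope_exp_zero]

lemma eulerH_eq_iteratedDeriv_eulerGen (α : ℝ) (m : ℕ) (z : ℝ) :
    eulerH α m z = iteratedDeriv m (eulerGen α z) 0 := rfl

lemma contDiff_bernoulliGen (α z : ℝ) : ContDiff ℝ ⊤ (bernoulliGen α z) :=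
  ((contDiff_dslope_exp_zero.inv fun u => (dslope_exp_zero_pos u).ne').rpow_const_of_ne
    fun u => (inv_pos.2 (dslope_exp_zero_pos u)).ne').mul (by fun_prop)

lemma contDiff_eulerGen (α z : ℝ) : ContDiff ℝ ⊤ (eulerGen α z) :=
  (ContDiff.rpow_const_of_ne (by fun_prop (disch := intro; positivity))
    fun u => by positivity).mul (by fun_prop)

lemma eulerGen_mul_bernoulliGen (α x y u : ℝ) :
    eulerGen α y u * bernoulliGen α x u = bernoulliGen α ((x + y) / 2) (2 * u) := by
  have hpos := dslope_exp_zero_pos u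
  rw [eulerGen, bernoulliGen, bernoulliGen, dslope_exp_zero_two_mul,
    show (dslope exp 0 u * (exp u + 1) / 2)⁻¹ = 2 / (exp u + 1) * (dslope exp 0 u)⁻¹ by
      field_simp,
    mul_rpow (by positivity) (by positivity),
    show 2 * u * ((x + y) / 2) = u * y + u * x by ring, exp_add]
  ring

theorem stmt_4 (x y n : ℝ) (m : ℕ) :
    ∑ k ∈ Finset.range (m + 1),
        (Nat.choose m k : ℝ) * bernoulliH n (m - k) x * eulerH n k y
      = 2 ^ m * bernoulliH n m ((x + y) / 2) := by
  have hprod : eulerGen n y * bernoulliGen n x = fun u => bernoulliGen n ((x + y) / 2) (2 * u) :=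
    funext (eulerGen_mul_bernoulliGen n x y)
  calc ∑ k ∈ Finset.range (m + 1), (m.choose k : ℝ) * bernoulliH n (m - k) x * eulerH n k y
      = ∑ k ∈ Finset.range (m + 1), (m.choose k : ℝ) *
          iteratedDeriv k (eulerGen n y) 0 * iteratedDeriv (m - k) (bernoulliGen n x) 0 := by
        simp only [bernoulliH_eq_iteratedDeriv_bernoulliGen, eulerH_eq_iteratedDeriv_eulerGen]
        exact Finset.sum_congr rfl fun k _ => by ring
    _ = iteratedDeriv m (eulerGen n y * bernoulliGen n x) 0 :=
        (iteratedDeriv_mul ((contDiff_eulerGen n y).contDiffAt.of_le le_top)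
          ((contDiff_bernoulliGen n x).contDiffAt.of_le le_top)).symm
    _ = 2 ^ m * bernoulliH n m ((x + y) / 2) := by
        rw [hprod,
          congrFun (iteratedDeriv_comp_const_mul ((contDiff_bernoulliGen n _).of_le le_top) 2) 0,
          mul_zero, bernoulliH_eq_iteratedDeriv_bernoulliGen]
end

section
/- Let r ≥ 1, let α_1,…,α_r be real orders, y_1,…,y_r real numbers with y_s ≠ α_s/2 for each s, and n_1,…,n_r nonnegative integers. If n_1 + ⋯ + n_r is odd (so that n_1+⋯+n_r+1 is even), then ∫_0^1 ∏_{s=1}^r E_{n_s}^{(α_s)}((α_s − 2y_s) z + y_s) dz = 0. -/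
lemma eulerH_reflect (α : ℝ) (m : ℕ) (z : ℝ) :
    eulerH α m (α - z) = (-1 : ℝ) ^ m * eulerH α m z := by
  unfold eulerH
  have hfun : (fun u : ℝ => (2 / (Real.exp u + 1)) ^ α * Real.exp (u * (α - z)))
      = fun u : ℝ => (2 / (Real.exp (-u) + 1)) ^ α * Real.exp ((-u) * z) := by
    funext u
    have h1 : (0:ℝ) < Real.exp u + 1 := by positivity
    have key : (2 / (Real.exp (-u) + 1)) = (2 / (Real.exp u + 1)) * Real.exp u := by
      rw [Real.exp_neg]
      have h3 : Real.exp u ≠ 0 := (Real.exp_pos u).ne'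
      field_simp
      ring
    rw [key, Real.mul_rpow (by positivity) (Real.exp_pos u).le, ← Real.exp_mul,
      mul_assoc, ← Real.exp_add]
    ring_nf
  rw [hfun]
  have := iteratedDeriv_comp_neg m
    (fun u : ℝ => (2 / (Real.exp u + 1)) ^ α * Real.exp (u * z)) 0
  simpa [neg_zero, smul_eq_mul] using this

theorem stmt_5 (r : ℕ) (hr : 1 ≤ r) (α y : Fin r → ℝ) (hy : ∀ s, y s ≠ α s / 2)
    (n : Fin r → ℕ) (hodd : Odd (∑ s, n s)) :
    ∫ z in (0 : ℝ)..1, ∏ s, eulerH (α s) (n s) ((α s - 2 * y s) * z + y s) = 0 := by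
  set f : ℝ → ℝ := fun z => ∏ s, eulerH (α s) (n s) ((α s - 2 * y s) * z + y s) with hf
  have hrefl : ∀ z : ℝ, f (1 - z) = - f z := by
    intro z
    have : ∀ s : Fin r, eulerH (α s) (n s) ((α s - 2 * y s) * (1 - z) + y s)
        = (-1 : ℝ) ^ (n s) * eulerH (α s) (n s) ((α s - 2 * y s) * z + y s) := by
      intro s
      have harg : (α s - 2 * y s) * (1 - z) + y s = α s - ((α s - 2 * y s) * z + y s) := by
        ring
      rw [harg, eulerH_reflect]
    calc f (1 - z) = ∏ s, ((-1 : ℝ) ^ (n s) * eulerH (α s) (n s) ((α s - 2 * y s) * z + y s)) := by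
          simp only [hf]; exact Finset.prod_congr rfl fun s _ => this s
      _ = ((-1 : ℝ) ^ (∑ s, n s)) * f z := by
          rw [Finset.prod_mul_distrib, Finset.prod_pow_eq_pow_sum]
      _ = - f z := by rw [hodd.neg_one_pow]; ring
  have h1 : (∫ z in (0:ℝ)..1, f (1 - z)) = ∫ z in (0:ℝ)..1, f z := by
    rw [intervalIntegral.integral_comp_sub_left f 1]
    norm_num
  have h2 : (∫ z in (0:ℝ)..1, f (1 - z)) = - ∫ z in (0:ℝ)..1, f z := by
    simp only [hrefl]
    exact intervalIntegral.integral_neg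
  have : (∫ z in (0:ℝ)..1, f z) = - ∫ z in (0:ℝ)..1, f z := h1.symm.trans h2
  linarith
end

section
/- Let y_1, y_2 be real numbers and m, n nonnegative integers. Then for every real x: Σ_{a=0}^{n} C(m+n+1, n−a) 2^{m+1+a} E_{n−a}(2x + y_1) E_{m+a+1}(−x + y_2) + Σ_{a=0}^{m} C(m+n+1, m−a) 2^{m−a} E_{m−a}(−x + y_2) E_{n+a+1}(2x + y_1) = E_{m+n+1}(2y_2 + y_1) + 2^{m+n+1} E_{m+n+1}((2y_2 + y_1)/2) − 2^{m+n+1} E_{m+n+1}((2y_2 + y_1 + 1)/2). -/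
open Finset Real

noncomputable def eulerGenFun (z u : ℝ) : ℝ := 2 / (exp u + 1) * exp (u * z)

lemma eulerH_one_eq_iteratedDeriv (m : ℕ) (z : ℝ) :
    eulerH 1 m z = iteratedDeriv m (eulerGenFun z) 0 := by
  simp only [eulerH, rpow_one]
  rfl

lemma contDiff_eulerGenFun (z : ℝ) {n : WithTop ℕ∞} : ContDiff ℝ n (eulerGenFun z) :=
  (contDiff_const.div (contDiff_exp.add contDiff_const) fun u => by positivity).mul
    (contDiff_exp.comp (contDiff_id.mul contDiff_const))

lemma iteratedDeriv_eulerGenFun_two_mul (m : ℕ) (z : ℝ) :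
    iteratedDeriv m (fun u => eulerGenFun z (2 * u)) 0 = 2 ^ m * eulerH 1 m z := by
  simp only [iteratedDeriv_comp_const_mul (contDiff_eulerGenFun z), mul_zero,
    eulerH_one_eq_iteratedDeriv]

-- `4 / ((A + 1) (A² + 1)) = 2 / (A + 1) + 2 (1 - A) / (A² + 1)` with `A = eᵘ`.
lemma eulerGenFun_mul_eulerGenFun_two_mul (z₁ z₂ u : ℝ) :
    eulerGenFun z₁ u * eulerGenFun z₂ (2 * u)
      = eulerGenFun (z₁ + 2 * z₂) u + eulerGenFun ((z₁ + 2 * z₂) / 2) (2 * u)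
        - eulerGenFun ((z₁ + 2 * z₂ + 1) / 2) (2 * u) := by
  have hexp_two_mul : exp (2 * u) = exp u ^ 2 := by rw [← exp_nat_mul]; norm_num
  have hw : exp (u * (z₁ + 2 * z₂)) = exp (u * z₁) * exp (u * z₂) ^ 2 := by
    rw [← exp_nat_mul, ← exp_add]; ring_nf
  have hz₂ : exp (2 * u * z₂) = exp (u * z₂) ^ 2 := by
    rw [← exp_nat_mul]; ring_nf
  have hw₂ : exp (2 * u * ((z₁ + 2 * z₂) / 2)) = exp (u * (z₁ + 2 * z₂)) := by ring_nf
  have hw₂' : exp (2 * u * ((z₁ + 2 * z₂ + 1) / 2)) = exp (u * (z₁ + 2 * z₂)) * exp u := by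
    rw [← exp_add]; ring_nf
  simp only [eulerGenFun, hexp_two_mul, hz₂, hw₂, hw₂', hw]
  have : exp u + 1 ≠ 0 := by positivity
  have : exp u ^ 2 + 1 ≠ 0 := by positivity
  field_simp
  ring

lemma sum_choose_mul_eulerH_mul_eulerH (N : ℕ) (z₁ z₂ : ℝ) :
    ∑ j ∈ range (N + 1), (N.choose j : ℝ) * eulerH 1 j z₁ * (2 ^ (N - j) * eulerH 1 (N - j) z₂)
      = eulerH 1 N (z₁ + 2 * z₂) + 2 ^ N * eulerH 1 N ((z₁ + 2 * z₂) / 2)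
        - 2 ^ N * eulerH 1 N ((z₁ + 2 * z₂ + 1) / 2) := by
  have hdilate (z : ℝ) : ContDiff ℝ N fun u => eulerGenFun z (2 * u) :=
    (contDiff_eulerGenFun z).comp (contDiff_const.mul contDiff_id)
  calc _ = iteratedDeriv N (fun u => eulerGenFun z₁ u * eulerGenFun z₂ (2 * u)) 0 := by
        rw [iteratedDeriv_fun_mul (contDiff_eulerGenFun z₁).contDiffAt (hdilate z₂).contDiffAt]
        simp only [eulerH_one_eq_iteratedDeriv, iteratedDeriv_eulerGenFun_two_mul]
    _ = iteratedDeriv N (fun u => eulerGenFun (z₁ + 2 * z₂) u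
          + eulerGenFun ((z₁ + 2 * z₂) / 2) (2 * u)
          - eulerGenFun ((z₁ + 2 * z₂ + 1) / 2) (2 * u)) 0 := by
        simp only [eulerGenFun_mul_eulerGenFun_two_mul]
    _ = _ := by
        rw [iteratedDeriv_fun_sub ((contDiff_eulerGenFun _).add (hdilate _)).contDiffAt
            (hdilate _).contDiffAt,
          iteratedDeriv_fun_add (contDiff_eulerGenFun _).contDiffAt (hdilate _).contDiffAt]
        simp only [iteratedDeriv_eulerGenFun_two_mul, eulerH_one_eq_iteratedDeriv]

lemma sum_range_eq_sum_reflect_add_sum_shift {M : Type*} [AddCommMonoid M] (c : ℕ → M)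
    (m n : ℕ) :
    ∑ j ∈ range (m + n + 2), c j
      = ∑ a ∈ range (n + 1), c (n - a) + ∑ a ∈ range (m + 1), c (n + 1 + a) := by
  rw [show m + n + 2 = (n + 1) + (m + 1) by omega, sum_range_add, ← sum_range_reflect]
  simp only [Nat.add_sub_cancel]

theorem stmt_11 (y₁ y₂ : ℝ) (m n : ℕ) (x : ℝ) :
    (∑ a ∈ Finset.range (n + 1), (Nat.choose (m + n + 1) (n - a) : ℝ) * 2 ^ (m + 1 + a) *
        eulerH 1 (n - a) (2 * x + y₁) * eulerH 1 (m + a + 1) (-x + y₂))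
      + (∑ a ∈ Finset.range (m + 1), (Nat.choose (m + n + 1) (m - a) : ℝ) * 2 ^ (m - a) *
        eulerH 1 (m - a) (-x + y₂) * eulerH 1 (n + a + 1) (2 * x + y₁))
    = eulerH 1 (m + n + 1) (2 * y₂ + y₁)
        + 2 ^ (m + n + 1) * eulerH 1 (m + n + 1) ((2 * y₂ + y₁) / 2)
        - 2 ^ (m + n + 1) * eulerH 1 (m + n + 1) ((2 * y₂ + y₁ + 1) / 2) := by
  have hw : 2 * x + y₁ + 2 * (-x + y₂) = 2 * y₂ + y₁ := by ring
  rw [← hw, ← sum_choose_mul_eulerH_mul_eulerH, sum_range_eq_sum_reflect_add_sum_shift]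
  congr 1 <;> refine sum_congr rfl fun a ha => ?_ <;> have := mem_range.mp ha
  · rw [show m + n + 1 - (n - a) = m + a + 1 by omega, show m + 1 + a = m + a + 1 by omega]
    ring
  · rw [show m + n + 1 - (n + 1 + a) = m - a by omega, show n + a + 1 = n + 1 + a by omega,
      ← Nat.choose_symm_of_eq_add (by omega : m + n + 1 = (m - a) + (n + 1 + a))]
    ring
end

section
/- Let n be a nonnegative integer and let s, t be positive real numbers with s/t < π. Then (1/n!) ∫_0^∞ e^{−su} Ē_n(tu) du = (1/s) Σ_{a=0}^{n} (E_a(0)/a!) (t/s)^{n−a} − (t^n/s^{n+1}) · 2/(e^{s/t} + 1), where the integral converges absolutely. -/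
/-- The quasi-periodic Euler function `Ē_n(x) = (-1)^⌊x⌋ E_n(x - ⌊x⌋)`. -/
noncomputable def eulerBar (n : ℕ) (x : ℝ) : ℝ :=
  (-1 : ℝ) ^ (⌊x⌋) * eulerH 1 n (x - ⌊x⌋)

/-!
Substituting `x = t u` turns the integral into the Laplace transform of `Ē_n` at `c = s / t`.
As `Ē_n` is antiperiodic with period one, splitting off `[0, 1]` and shifting the rest gives
`(1 + e^{-c}) ∫_0^∞ e^{-cx} Ē_n(x) dx = ∫_0^1 e^{-cx} E_n(x) dx`. The generating function yields
the Appell expansion `E_n(z) = ∑ C(n,k) E_k(0) z^{n-k}`, hence `E_n' = n E_{n-1}`, and the identity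
`2/(e^u+1) · e^u + 2/(e^u+1) = 2` yields `E_n(1) = -E_n(0)` for `n ≥ 1`. Integrating by parts then
gives a first-order recursion in `n` for the integral over `[0, 1]`, solved by the closed form.
-/

open Real Set MeasureTheory

lemma contDiff_two_div_exp_add_one : ContDiff ℝ ⊤ fun u : ℝ => 2 / (exp u + 1) :=
  contDiff_const.div (contDiff_exp.add contDiff_const) fun _ => by positivity

lemma eulerH_one_eq_iteratedDeriv_s19 (n : ℕ) (z : ℝ) :
    eulerH 1 n z = iteratedDeriv n ((fun u : ℝ => 2 / (exp u + 1)) * fun u => exp (z * u)) 0 := by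
  simp only [eulerH, rpow_one, mul_comm _ z]
  rfl

lemma eulerH_one_eq_sum (n : ℕ) (z : ℝ) :
    eulerH 1 n z = ∑ k ∈ Finset.range (n + 1), (n.choose k : ℝ) * eulerH 1 k 0 * z ^ (n - k) := by
  have hcd : ∀ {g : ℝ → ℝ}, ContDiff ℝ ⊤ g → ContDiffWithinAt ℝ n g univ 0 := fun hg =>
    (hg.of_le (mod_cast le_top)).contDiffWithinAt
  rw [eulerH_one_eq_iteratedDeriv_s19, ← iteratedDerivWithin_univ,
    iteratedDerivWithin_mul (Set.mem_univ (0 : ℝ)) uniqueDiffOn_univ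
      (hcd contDiff_two_div_exp_add_one) (hcd (g := fun u => exp (z * u)) (by fun_prop))]
  refine Finset.sum_congr rfl fun k _ => ?_
  simp [iteratedDerivWithin_univ, eulerH_one_eq_iteratedDeriv_s19, Pi.mul_def]

lemma eulerH_one_zero (z : ℝ) : eulerH 1 0 z = 1 := by
  norm_num [eulerH]

@[fun_prop]
lemma continuous_eulerH_one (n : ℕ) : Continuous (eulerH 1 n) := by
  simp_rw [funext (eulerH_one_eq_sum n)]
  fun_prop

lemma hasDerivAt_eulerH_one (n : ℕ) (z : ℝ) :
    HasDerivAt (eulerH 1 (n + 1)) ((n + 1) * eulerH 1 n z) z := by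
  rw [funext (eulerH_one_eq_sum (n + 1))]
  refine (HasDerivAt.fun_sum fun k _ =>
    (hasDerivAt_pow (n + 1 - k) z).const_mul (((n + 1).choose k : ℝ) * eulerH 1 k 0)).congr_deriv ?_
  symm
  rw [Finset.sum_range_succ, eulerH_one_eq_sum n z, Finset.mul_sum]
  simp only [Nat.sub_self, CharP.cast_eq_zero, zero_mul, mul_zero, add_zero]
  refine Finset.sum_congr rfl fun k hk => ?_
  have hk : k ≤ n := Nat.lt_succ_iff.mp (Finset.mem_range.mp hk)
  have hchoose : (n.choose k : ℝ) * (n + 1) = (n + 1).choose k * ((n + 1 - k : ℕ) : ℝ) := by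
    exact_mod_cast Nat.choose_mul_succ_eq n k
  rw [show n + 1 - k - 1 = n - k by omega]
  linear_combination (eulerH 1 k 0 * z ^ (n - k)) * hchoose

lemma eulerH_one_one {n : ℕ} (hn : n ≠ 0) : eulerH 1 n 1 = -eulerH 1 n 0 := by
  have hsum : ((fun u : ℝ => 2 / (exp u + 1)) * fun u => exp (1 * u)) +
      ((fun u : ℝ => 2 / (exp u + 1)) * fun u => exp (0 * u)) = fun _ => 2 := by
    funext u
    simp only [Pi.add_apply, Pi.mul_apply, one_mul, zero_mul, exp_zero]
    field_simp
  have h := iteratedDeriv_add (n := n) (x := (0 : ℝ))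
    (f := (fun u : ℝ => 2 / (exp u + 1)) * fun u => exp (1 * u))
    (g := (fun u : ℝ => 2 / (exp u + 1)) * fun u => exp (0 * u))
    ((contDiff_two_div_exp_add_one.mul (by fun_prop)).of_le (mod_cast le_top)).contDiffAt
    ((contDiff_two_div_exp_add_one.mul (by fun_prop)).of_le (mod_cast le_top)).contDiffAt
  rw [hsum, iteratedDeriv_const, if_neg hn, ← eulerH_one_eq_iteratedDeriv_s19,
    ← eulerH_one_eq_iteratedDeriv_s19] at h
  linarith

lemma eulerBar_antiperiodic (n : ℕ) : Function.Antiperiodic (eulerBar n) 1 := fun x => by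
  rw [eulerBar, eulerBar, Int.floor_add_one, zpow_add_one₀ (by norm_num)]
  push_cast
  ring_nf

lemma eulerBar_of_mem_Ico (n : ℕ) {x : ℝ} (hx : x ∈ Ico 0 1) : eulerBar n x = eulerH 1 n x := by
  simp [eulerBar, Int.floor_eq_zero_iff.mpr hx]

lemma exists_norm_eulerBar_le (n : ℕ) : ∃ C, ∀ x, ‖eulerBar n x‖ ≤ C := by
  obtain ⟨C, hC⟩ := (isCompact_Icc (a := (0 : ℝ)) (b := 1)).exists_bound_of_continuousOn
    (continuous_eulerH_one n).continuousOn
  refine ⟨C, fun x => ?_⟩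
  have hfract : x - ⌊x⌋ ∈ Icc (0 : ℝ) 1 := ⟨Int.fract_nonneg x, (Int.fract_lt_one x).le⟩
  simpa [eulerBar, norm_zpow] using hC _ hfract

lemma measurable_eulerBar (n : ℕ) : Measurable (eulerBar n) :=
  ((measurable_of_countable fun k : ℤ => (-1 : ℝ) ^ k).comp Int.measurable_floor).mul
    ((continuous_eulerH_one n).measurable.comp
      (measurable_id.sub (measurable_of_countable _ |>.comp Int.measurable_floor)))

lemma integrableOn_exp_neg_mul_of_bounded {f : ℝ → ℝ} {C c : ℝ} (a : ℝ)
    (hf : AEStronglyMeasurable f) (hC : ∀ x, ‖f x‖ ≤ C) (hc : 0 < c) :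
    IntegrableOn (fun x => exp (-c * x) * f x) (Ioi a) := by
  simpa only [IntegrableOn, mul_comm (exp _)] using
    (exp_neg_integrableOn_Ioi a hc).bdd_mul hf.restrict (Filter.Eventually.of_forall hC)

lemma integral_Ioi_eq_integral_Ioi_add (g : ℝ → ℝ) (p : ℝ) :
    ∫ x in Ioi p, g x = ∫ x in Ioi 0, g (x + p) := by
  rw [← (measurePreserving_add_right volume p).setIntegral_preimage_emb
    (measurableEmbedding_addRight p) g (Ioi p)]
  simp only [preimage_add_const_Ioi, sub_self]

/-- Splitting off the first period and shifting the rest by `p` gives `I = J - e^{-cp} I`. -/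
lemma integral_Ioi_exp_neg_mul_of_antiperiodic {f : ℝ → ℝ} {c p : ℝ} (hp : 0 ≤ p)
    (hf : Function.Antiperiodic f p) (hint : IntegrableOn (fun x => exp (-c * x) * f x) (Ioi 0)) :
    (1 + exp (-c * p)) * ∫ x in Ioi 0, exp (-c * x) * f x
      = ∫ x in (0 : ℝ)..p, exp (-c * x) * f x := by
  have hsplit := setIntegral_union (Ioc_disjoint_Ioi le_rfl) measurableSet_Ioi
    (hint.mono_set Ioc_subset_Ioi_self) (hint.mono_set (Ioi_subset_Ioi hp))
  rw [Ioc_union_Ioi_eq_Ioi hp, integral_Ioi_eq_integral_Ioi_add _ p] at hsplit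
  have hshift : ∀ x, exp (-c * (x + p)) * f (x + p) = -exp (-c * p) * (exp (-c * x) * f x) := by
    intro x
    rw [hf x, mul_add, exp_add]
    ring
  simp only [hshift, integral_const_mul] at hsplit
  rw [intervalIntegral.integral_of_le hp]
  linarith

lemma integral_Ioi_exp_neg_mul_comp_mul (f : ℝ → ℝ) (s : ℝ) {t : ℝ} (ht : 0 < t) :
    ∫ u in Ioi 0, exp (-s * u) * f (t * u) = t⁻¹ * ∫ x in Ioi 0, exp (-(s / t) * x) * f x := by
  have h := integral_comp_mul_left_Ioi (fun x => exp (-(s / t) * x) * f x) 0 ht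
  rw [mul_zero, smul_eq_mul] at h
  rw [← h]
  refine setIntegral_congr_fun measurableSet_Ioi fun u _ => ?_
  rw [show -(s / t) * (t * u) = -s * u by field_simp]

lemma mul_integral_exp_neg_mul_eulerH_one_zero (c : ℝ) :
    c * ∫ x in (0 : ℝ)..1, exp (-c * x) * eulerH 1 0 x = 1 - exp (-c) := by
  have hderiv : ∀ x ∈ uIcc (0 : ℝ) 1,
      HasDerivAt (fun y => exp (-c * y)) (-c * (exp (-c * x) * eulerH 1 0 x)) x := fun x _ => by
    simpa [eulerH_one_zero, mul_comm] using ((hasDerivAt_id x).const_mul (-c)).exp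
  have hftc := intervalIntegral.integral_eq_sub_of_hasDerivAt hderiv
    (by apply Continuous.intervalIntegrable; fun_prop)
  simp only [intervalIntegral.integral_const_mul, mul_one, mul_zero, exp_zero] at hftc
  linarith

lemma mul_integral_exp_neg_mul_eulerH_one_succ (c : ℝ) (n : ℕ) :
    c * ∫ x in (0 : ℝ)..1, exp (-c * x) * eulerH 1 (n + 1) x
      = (1 + exp (-c)) * eulerH 1 (n + 1) 0
        + (n + 1) * ∫ x in (0 : ℝ)..1, exp (-c * x) * eulerH 1 n x := by
  have hcont : ∀ m, Continuous fun x => exp (-c * x) * eulerH 1 m x := fun m => by fun_prop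
  have hderiv : ∀ x ∈ uIcc (0 : ℝ) 1, HasDerivAt (fun y => exp (-c * y) * eulerH 1 (n + 1) y)
      (-c * (exp (-c * x) * eulerH 1 (n + 1) x) + (n + 1) * (exp (-c * x) * eulerH 1 n x)) x :=
    fun x _ => by
      have hexp : HasDerivAt (fun y => exp (-c * y)) (exp (-c * x) * -c) x := by
        simpa using ((hasDerivAt_id x).const_mul (-c)).exp
      exact (hexp.mul (hasDerivAt_eulerH_one n x)).congr_deriv (by ring)
  have hftc := intervalIntegral.integral_eq_sub_of_hasDerivAt hderiv
    (by apply Continuous.intervalIntegrable; fun_prop)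
  rw [intervalIntegral.integral_add (((hcont _).const_mul _).intervalIntegrable 0 1)
      (((hcont _).const_mul _).intervalIntegrable 0 1),
    intervalIntegral.integral_const_mul, intervalIntegral.integral_const_mul,
    eulerH_one_one n.succ_ne_zero] at hftc
  simp only [mul_one, mul_zero, exp_zero] at hftc
  linarith

lemma integral_exp_neg_mul_eulerH_one {c : ℝ} (hc : c ≠ 0) (n : ℕ) :
    ∫ x in (0 : ℝ)..1, exp (-c * x) * eulerH 1 n x
      = n.factorial * (1 + exp (-c)) *
        (c⁻¹ * ∑ a ∈ Finset.range (n + 1), eulerH 1 a 0 / a.factorial * c⁻¹ ^ (n - a)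
          - c⁻¹ ^ (n + 1) * (2 / (exp c + 1))) := by
  have hexp : exp (-c) * exp c = 1 := by rw [← exp_add, neg_add_cancel, exp_zero]
  induction n with
  | zero =>
    rw [eq_div_of_mul_eq hc ((mul_comm _ _).trans (mul_integral_exp_neg_mul_eulerH_one_zero c))]
    simp only [zero_add, Finset.sum_range_one, eulerH_one_zero, Nat.factorial_zero, Nat.cast_one,
      pow_one, div_one, one_mul]
    field_simp
    linear_combination (-2) * hexp
  | succ n ih =>
    set S := ∑ a ∈ Finset.range (n + 1), eulerH 1 a 0 / a.factorial * c⁻¹ ^ (n - a)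
    have hsum : ∑ a ∈ Finset.range (n + 2), eulerH 1 a 0 / a.factorial * c⁻¹ ^ (n + 1 - a)
        = c⁻¹ * S + eulerH 1 (n + 1) 0 / (n + 1).factorial := by
      rw [Finset.sum_range_succ, Finset.mul_sum, Nat.sub_self, pow_zero, mul_one]
      congr 1
      refine Finset.sum_congr rfl fun a ha => ?_
      rw [show n + 1 - a = n - a + 1 by have := Finset.mem_range.mp ha; omega, pow_succ]
      ring
    have hrec := mul_integral_exp_neg_mul_eulerH_one_succ c n
    rw [ih] at hrec
    rw [hsum, eq_div_of_mul_eq hc ((mul_comm _ _).trans hrec)]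
    push_cast [Nat.factorial_succ]
    simp only [inv_pow]
    field_simp
    ring

lemma intervalIntegral_exp_neg_mul_eulerBar (c : ℝ) (n : ℕ) :
    ∫ x in (0 : ℝ)..1, exp (-c * x) * eulerBar n x
      = ∫ x in (0 : ℝ)..1, exp (-c * x) * eulerH 1 n x := by
  simp only [intervalIntegral.integral_of_le zero_le_one, integral_Ioc_eq_integral_Ioo]
  exact setIntegral_congr_fun measurableSet_Ioo fun x hx => by
    rw [eulerBar_of_mem_Ico n (Ioo_subset_Ico_self hx)]

lemma integral_Ioi_exp_neg_mul_eulerBar {c : ℝ} (hc : 0 < c) (n : ℕ) :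
    ∫ x in Ioi 0, exp (-c * x) * eulerBar n x
      = n.factorial *
        (c⁻¹ * ∑ a ∈ Finset.range (n + 1), eulerH 1 a 0 / a.factorial * c⁻¹ ^ (n - a)
          - c⁻¹ ^ (n + 1) * (2 / (exp c + 1))) := by
  obtain ⟨C, hC⟩ := exists_norm_eulerBar_le n
  have h := integral_Ioi_exp_neg_mul_of_antiperiodic zero_le_one (eulerBar_antiperiodic n)
    (integrableOn_exp_neg_mul_of_bounded 0 (measurable_eulerBar n).aestronglyMeasurable hC hc)
  rw [mul_one, intervalIntegral_exp_neg_mul_eulerBar, integral_exp_neg_mul_eulerH_one hc.ne'] at h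
  exact mul_left_cancel₀ (by positivity) (h.trans (by ring))

theorem stmt_19_general (n : ℕ) (s t : ℝ) (hs : 0 < s) (ht : 0 < t) :
    MeasureTheory.IntegrableOn
        (fun u : ℝ => Real.exp (-s * u) * eulerBar n (t * u)) (Set.Ioi 0) ∧
      (1 / (n.factorial : ℝ)) *
          ∫ u in Set.Ioi (0 : ℝ), Real.exp (-s * u) * eulerBar n (t * u)
        = (1 / s) * (∑ a ∈ Finset.range (n + 1),
              (eulerH 1 a 0 / (a.factorial : ℝ)) * (t / s) ^ (n - a))
          - (t ^ n / s ^ (n + 1)) * (2 / (Real.exp (s / t) + 1)) := by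
  obtain ⟨C, hC⟩ := exists_norm_eulerBar_le n
  refine ⟨integrableOn_exp_neg_mul_of_bounded 0
    ((measurable_eulerBar n).comp (measurable_const_mul t)).aestronglyMeasurable (fun u => hC _) hs,
    ?_⟩
  rw [integral_Ioi_exp_neg_mul_comp_mul _ s ht,
    integral_Ioi_exp_neg_mul_eulerBar (div_pos hs ht), inv_div]
  set S := ∑ a ∈ Finset.range (n + 1), eulerH 1 a 0 / a.factorial * (t / s) ^ (n - a)
  rw [div_pow]
  field_simp
  ring

theorem stmt_19 (n : ℕ) (s t : ℝ) (hs : 0 < s) (ht : 0 < t) (hst : s / t < Real.pi) :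
    MeasureTheory.IntegrableOn
        (fun u : ℝ => Real.exp (-s * u) * eulerBar n (t * u)) (Set.Ioi 0) ∧
      (1 / (n.factorial : ℝ)) *
          ∫ u in Set.Ioi (0 : ℝ), Real.exp (-s * u) * eulerBar n (t * u)
        = (1 / s) * (∑ a ∈ Finset.range (n + 1),
              (eulerH 1 a 0 / (a.factorial : ℝ)) * (t / s) ^ (n - a))
          - (t ^ n / s ^ (n + 1)) * (2 / (Real.exp (s / t) + 1)) :=
  stmt_19_general n s t hs ht
end
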